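/- arXiv:2604.02380 — 4 statements merged into one kernel-verified Lean document; each statement's English description precedes it below -/
import Mathlib

section
/- Let γ : [0,L] → ℝ^d be a unit-speed curve whose derivative γ' is K-Lipschitz for some K > 0. Then for all σ_x, σ_t > 0 and every ρ with 0 < ρ < L, V(γ,γ) ≥ L·ρ·exp(−ρ²/σ_x²)·exp(−K²ρ²/σ_t²). -/
open Set MeasureTheory

/-- The Gaussian varifold inner product of two (parameterized) curves
`f, g : ℝ → ℝ^d` with respective derivatives `f', g'`, over parameter
intervals `[0, L₁]` and `[0, L₂]`, with spatial scale `σx` and tangential scale `σt`. -/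
noncomputable def vprod (d : ℕ) (σx σt L₁ L₂ : ℝ)
    (f f' g g' : ℝ → EuclideanSpace ℝ (Fin d)) : ℝ :=
  ∫ s in (0:ℝ)..L₁, ∫ t in (0:ℝ)..L₂,
    Real.exp (-‖f s - g t‖ ^ 2 / σx ^ 2) * Real.exp (-‖f' s - g' t‖ ^ 2 / σt ^ 2)

/-- A unit-speed curve in `ℝ^d`: a continuously differentiable map `γ : [0,L] → ℝ^d`
with `L > 0`, derivative `γ'`, and `‖γ'(s)‖ = 1` for all `s ∈ [0,L]`. -/
structure UnitSpeedCurve (d : ℕ) where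
  L : ℝ
  γ : ℝ → EuclideanSpace ℝ (Fin d)
  γ' : ℝ → EuclideanSpace ℝ (Fin d)
  L_pos : 0 < L
  hasDeriv : ∀ s ∈ Set.Icc (0:ℝ) L, HasDerivWithinAt γ (γ' s) (Set.Icc 0 L) s
  contDeriv : ContinuousOn γ' (Set.Icc 0 L)
  unitSpeed : ∀ s ∈ Set.Icc (0:ℝ) L, ‖γ' s‖ = 1

/-- The Gaussian varifold inner product `V(γ₁, γ₂)` of two unit-speed curves. -/
noncomputable def V {d : ℕ} (σx σt : ℝ) (c₁ c₂ : UnitSpeedCurve d) : ℝ :=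
  vprod d σx σt c₁.L c₂.L c₁.γ c₁.γ' c₂.γ c₂.γ'

/-- **Lower bound on the self inner product.** For a unit-speed curve `γ` whose derivative
is `K`-Lipschitz (`K > 0`), and every `ρ ∈ (0, L)`,
`V(γ,γ) ≥ L·ρ·exp(−ρ²/σx²)·exp(−K²ρ²/σt²)`. -/
theorem self_vprod_lower_bound {d : ℕ} (c : UnitSpeedCurve d) (K : ℝ) (hK : 0 < K)
    (hlip : ∀ s ∈ Set.Icc (0:ℝ) c.L, ∀ t ∈ Set.Icc (0:ℝ) c.L,
      ‖c.γ' s - c.γ' t‖ ≤ K * |s - t|) :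
    ∀ σx > (0:ℝ), ∀ σt > (0:ℝ), ∀ ρ : ℝ, 0 < ρ → ρ < c.L →
      c.L * ρ * Real.exp (-ρ ^ 2 / σx ^ 2) * Real.exp (-K ^ 2 * ρ ^ 2 / σt ^ 2) ≤
        V σx σt c c := by
  intro σx hσx σt hσt ρ hρ hρL
  set L := c.L with hLdef
  have hL : 0 < L := c.L_pos
  have hγcont : ContinuousOn c.γ (Set.Icc 0 L) := fun s hs =>
    (c.hasDeriv s hs).continuousWithinAt
  -- clamp function
  set π : ℝ → ℝ := fun x => max 0 (min x L) with hπdef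
  have hπcont : Continuous π := (continuous_const.max ((continuous_id.min continuous_const)))
  have hπmem : ∀ x, π x ∈ Set.Icc (0:ℝ) L := by
    intro x
    exact ⟨le_max_left _ _, max_le hL.le (min_le_right _ _)⟩
  have hπid : ∀ x ∈ Set.Icc (0:ℝ) L, π x = x := by
    intro x hx
    simp [hπdef, min_eq_left hx.2, max_eq_right hx.1]
  set G : ℝ → EuclideanSpace ℝ (Fin d) := fun x => c.γ (π x) with hGdef
  set G' : ℝ → EuclideanSpace ℝ (Fin d) := fun x => c.γ' (π x) with hG'def
  have hG : Continuous G := hγcont.comp_continuous hπcont hπmem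
  have hG' : Continuous G' := c.contDeriv.comp_continuous hπcont hπmem
  have hGeq : ∀ x ∈ Set.Icc (0:ℝ) L, G x = c.γ x := fun x hx => by
    simp only [hGdef]; rw [hπid x hx]
  have hG'eq : ∀ x ∈ Set.Icc (0:ℝ) L, G' x = c.γ' x := fun x hx => by
    simp only [hG'def]; rw [hπid x hx]
  set Φ : ℝ → ℝ → ℝ := fun s t =>
    Real.exp (-‖G s - G t‖ ^ 2 / σx ^ 2) * Real.exp (-‖G' s - G' t‖ ^ 2 / σt ^ 2) with hΦdef
  have hΦcont : Continuous (Function.uncurry Φ) := by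
    apply Continuous.mul
    · exact Real.continuous_exp.comp
        (((((hG.comp continuous_fst).sub (hG.comp continuous_snd)).norm.pow 2).neg).div_const _)
    · exact Real.continuous_exp.comp
        (((((hG'.comp continuous_fst).sub (hG'.comp continuous_snd)).norm.pow 2).neg).div_const _)
  have hΦpos : ∀ s t, 0 ≤ Φ s t := fun s t =>
    le_of_lt (mul_pos (Real.exp_pos _) (Real.exp_pos _))
  set A : ℝ := Real.exp (-ρ ^ 2 / σx ^ 2) * Real.exp (-K ^ 2 * ρ ^ 2 / σt ^ 2) with hAdef
  have hA : 0 < A := mul_pos (Real.exp_pos _) (Real.exp_pos _)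
  -- pointwise lower bound on the band |s - t| ≤ ρ
  have hband : ∀ s ∈ Set.Icc (0:ℝ) L, ∀ t ∈ Set.Icc (0:ℝ) L, |s - t| ≤ ρ → A ≤ Φ s t := by
    intro s hs t ht hst
    have habs : (0:ℝ) ≤ |s - t| := abs_nonneg _
    have hγdist : ‖c.γ s - c.γ t‖ ≤ ρ := by
      have := (convex_Icc (0:ℝ) L).norm_image_sub_le_of_norm_hasDerivWithin_le
        (f := c.γ) (f' := c.γ') c.hasDeriv (fun x hx => (c.unitSpeed x hx).le) ht hs
      calc ‖c.γ s - c.γ t‖ ≤ 1 * ‖s - t‖ := this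
        _ = |s - t| := by rw [one_mul, Real.norm_eq_abs]
        _ ≤ ρ := hst
    have hγ'dist : ‖c.γ' s - c.γ' t‖ ≤ K * ρ := by
      calc ‖c.γ' s - c.γ' t‖ ≤ K * |s - t| := hlip s hs t ht
        _ ≤ K * ρ := by nlinarith
    have h1 : ‖c.γ s - c.γ t‖ ^ 2 ≤ ρ ^ 2 := by
      nlinarith [norm_nonneg (c.γ s - c.γ t)]
    have h2 : ‖c.γ' s - c.γ' t‖ ^ 2 ≤ K ^ 2 * ρ ^ 2 := by
      nlinarith [norm_nonneg (c.γ' s - c.γ' t)]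
    simp only [hΦdef]
    rw [hGeq s hs, hGeq t ht, hG'eq s hs, hG'eq t ht, hAdef]
    have e1 : Real.exp (-ρ ^ 2 / σx ^ 2) ≤ Real.exp (-‖c.γ s - c.γ t‖ ^ 2 / σx ^ 2) := by
      apply Real.exp_le_exp.mpr
      have hx2 : (0:ℝ) < σx ^ 2 := by positivity
      rw [div_le_div_iff_of_pos_right hx2]
      linarith
    have e2 : Real.exp (-K ^ 2 * ρ ^ 2 / σt ^ 2) ≤ Real.exp (-‖c.γ' s - c.γ' t‖ ^ 2 / σt ^ 2) := by
      apply Real.exp_le_exp.mpr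
      have ht2 : (0:ℝ) < σt ^ 2 := by positivity
      rw [div_le_div_iff_of_pos_right ht2]
      linarith
    exact mul_le_mul e1 e2 (Real.exp_pos _).le (Real.exp_pos _).le
  -- inner integral lower bound
  have hinner : ∀ s ∈ Set.Icc (0:ℝ) L, ρ * A ≤ ∫ t in (0:ℝ)..L, Φ s t := by
    intro s hs
    set a : ℝ := min s (L - ρ) with hadef
    have ha0 : 0 ≤ a := le_min hs.1 (by linarith)
    have haρ : a + ρ ≤ L := by
      have : a ≤ L - ρ := min_le_right _ _
      linarith
    have has : a ≤ s := min_le_left _ _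
    have hsa : s ≤ a + ρ := by
      rcases min_cases s (L - ρ) with ⟨h, _⟩ | ⟨h, _⟩
      · rw [hadef, h]; linarith
      · rw [hadef, h]; linarith [hs.2]
    have hintΦ : IntervalIntegrable (Φ s) volume 0 L :=
      (hΦcont.comp (Continuous.prodMk_right s)).intervalIntegrable 0 L
    have step1 : ∫ t in a..(a+ρ), Φ s t ≤ ∫ t in (0:ℝ)..L, Φ s t := by
      apply intervalIntegral.integral_mono_interval ha0 (by linarith) haρ
        (Filter.Eventually.of_forall fun t => hΦpos s t) hintΦ
    have step2 : ρ * A ≤ ∫ t in a..(a+ρ), Φ s t := by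
      have hconst : ∫ t in a..(a+ρ), A = ρ * A := by
        rw [intervalIntegral.integral_const, smul_eq_mul]; ring
      rw [← hconst]
      apply intervalIntegral.integral_mono_on (by linarith)
        intervalIntegrable_const (hintΦ.mono_set (by
          rw [Set.uIcc_of_le (by linarith : a ≤ a + ρ), Set.uIcc_of_le hL.le]
          exact Set.Icc_subset_Icc ha0 haρ))
      intro t htmem
      apply hband s hs t ⟨le_trans ha0 htmem.1, le_trans htmem.2 haρ⟩
      rw [abs_sub_le_iff]
      constructor <;> [linarith [htmem.1]; linarith [htmem.2]]
    linarith
  -- rewrite V using the clamped integrand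
  have hVeq : V σx σt c c = ∫ s in (0:ℝ)..L, ∫ t in (0:ℝ)..L, Φ s t := by
    rw [V, vprod]
    apply intervalIntegral.integral_congr
    intro s hs
    rw [Set.uIcc_of_le hL.le] at hs
    apply intervalIntegral.integral_congr
    intro t ht
    rw [Set.uIcc_of_le hL.le] at ht
    simp only [hΦdef]
    rw [hGeq s hs, hGeq t ht, hG'eq s hs, hG'eq t ht]
  rw [hVeq]
  have hgcont : Continuous fun s => ∫ t in (0:ℝ)..L, Φ s t :=
    intervalIntegral.continuous_parametric_intervalIntegral_of_continuous' hΦcont 0 L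
  have final : ∫ s in (0:ℝ)..L, (ρ * A) ≤ ∫ s in (0:ℝ)..L, ∫ t in (0:ℝ)..L, Φ s t := by
    apply intervalIntegral.integral_mono_on hL.le intervalIntegrable_const
      (hgcont.intervalIntegrable 0 L)
    intro s hs
    exact hinner s hs
  have hconst2 : ∫ s in (0:ℝ)..L, (ρ * A) = L * (ρ * A) := by
    rw [intervalIntegral.integral_const, smul_eq_mul]; ring
  rw [hconst2] at final
  calc L * ρ * Real.exp (-ρ ^ 2 / σx ^ 2) * Real.exp (-K ^ 2 * ρ ^ 2 / σt ^ 2)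
      = L * (ρ * A) := by rw [hAdef]; ring
    _ ≤ _ := final
end

section
/- Let α : [0,L₀] → ℝ^d be a unit-speed curve and let β₁ : [0,L₁] → ℝ^d and β₂ : [0,L₂] → ℝ^d be unit-speed curves with β₁(0) = β₂(0) = α(L₀) and β₁'(0) = β₂'(0) = α'(L₀). Then for all σ_x, σ_t > 0, Δ(α⊕β₁, α⊕β₂) = V(β₁,β₁) + V(β₂,β₂) − 2·V(β₁,β₂). -/
open Set MeasureTheory

/-- Concatenation of two parameterized maps: `(f ⊕ g)(s) = f s` for `s ≤ L₀` and
`(f ⊕ g)(s) = g (s - L₀)` for `s > L₀`. Applied both to curves and to their derivatives. -/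
noncomputable def concat {d : ℕ} (L₀ : ℝ) (f g : ℝ → EuclideanSpace ℝ (Fin d)) :
    ℝ → EuclideanSpace ℝ (Fin d) :=
  fun s => if s ≤ L₀ then f s else g (s - L₀)

/-- The Gaussian varifold self inner product of the concatenation `α ⊕ β` of two
consecutive unit-speed curves, parameterized over `[0, α.L + β.L]`. -/
noncomputable def Vconcat {d : ℕ} (σx σt : ℝ) (a b c e : UnitSpeedCurve d) : ℝ :=
  vprod d σx σt (a.L + b.L) (c.L + e.L)
    (concat a.L a.γ b.γ) (concat a.L a.γ' b.γ')
    (concat c.L c.γ e.γ) (concat c.L c.γ' e.γ')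

/-! ### Abstract auxiliary material -/

section Abstract

variable {E : Type*} [NormedAddCommGroup E]

noncomputable def ker (σx σt : ℝ) (x x' y y' : E) : ℝ :=
  Real.exp (-‖x - y‖ ^ 2 / σx ^ 2) * Real.exp (-‖x' - y'‖ ^ 2 / σt ^ 2)

lemma ker_nonneg {σx σt : ℝ} {x x' y y' : E} : 0 ≤ ker σx σt x x' y y' :=
  le_of_lt (mul_pos (Real.exp_pos _) (Real.exp_pos _))

lemma ker_le_one {σx σt : ℝ} {x x' y y' : E} : ker σx σt x x' y y' ≤ 1 := by
  have h1 : Real.exp (-‖x - y‖ ^ 2 / σx ^ 2) ≤ 1 := by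
    rw [Real.exp_le_one_iff, neg_div]; exact neg_nonpos.mpr (by positivity)
  have h2 : Real.exp (-‖x' - y'‖ ^ 2 / σt ^ 2) ≤ 1 := by
    rw [Real.exp_le_one_iff, neg_div]; exact neg_nonpos.mpr (by positivity)
  calc ker σx σt x x' y y' ≤ 1 * 1 :=
        mul_le_mul h1 h2 (Real.exp_pos _).le zero_le_one
    _ = 1 := by ring

lemma ker_norm_le_one {σx σt : ℝ} {x x' y y' : E} : ‖ker σx σt x x' y y'‖ ≤ 1 := by
  rw [Real.norm_of_nonneg ker_nonneg]; exact ker_le_one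

lemma ker_symm {σx σt : ℝ} {x x' y y' : E} :
    ker σx σt x x' y y' = ker σx σt y y' x x' := by
  unfold ker; rw [norm_sub_rev x y, norm_sub_rev x' y']

lemma ker_contOn_t (σx σt : ℝ) (x x' : E) {B B' : ℝ → E} {T : Set ℝ}
    (hB : ContinuousOn B T) (hB' : ContinuousOn B' T) :
    ContinuousOn (fun t => ker σx σt x x' (B t) (B' t)) T := by
  unfold ker; fun_prop

lemma ker_cwa (σx σt : ℝ) (y y' : E) {F F' : ℝ → E} {S : Set ℝ} {x₀ : ℝ}
    (hF : ContinuousWithinAt F S x₀) (hF' : ContinuousWithinAt F' S x₀) :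
    ContinuousWithinAt (fun x => ker σx σt (F x) (F' x) y y') S x₀ := by
  unfold ker
  apply ContinuousWithinAt.mul
  · exact (Real.continuous_exp.continuousAt).comp_continuousWithinAt
      (((hF.sub continuousWithinAt_const).norm.pow 2).neg.div_const _)
  · exact (Real.continuous_exp.continuousAt).comp_continuousWithinAt
      (((hF'.sub continuousWithinAt_const).norm.pow 2).neg.div_const _)

lemma ker_contOn_prod (σx σt : ℝ) {A A' B B' : ℝ → E} {S T : Set ℝ}
    (hA : ContinuousOn A S) (hA' : ContinuousOn A' S)
    (hB : ContinuousOn B T) (hB' : ContinuousOn B' T) :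
    ContinuousOn (fun p : ℝ × ℝ => ker σx σt (A p.1) (A' p.1) (B p.2) (B' p.2))
      (S ×ˢ T) := by
  have h1 : ContinuousOn (fun p : ℝ × ℝ => A p.1) (S ×ˢ T) :=
    hA.comp continuous_fst.continuousOn fun p hp => hp.1
  have h1' : ContinuousOn (fun p : ℝ × ℝ => A' p.1) (S ×ˢ T) :=
    hA'.comp continuous_fst.continuousOn fun p hp => hp.1
  have h2 : ContinuousOn (fun p : ℝ × ℝ => B p.2) (S ×ˢ T) :=
    hB.comp continuous_snd.continuousOn fun p hp => hp.2
  have h2' : ContinuousOn (fun p : ℝ × ℝ => B' p.2) (S ×ˢ T) :=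
    hB'.comp continuous_snd.continuousOn fun p hp => hp.2
  unfold ker
  apply ContinuousOn.mul
  · exact Real.continuous_exp.comp_continuousOn
      (((h1.sub h2).norm.pow 2).neg.div_const _)
  · exact Real.continuous_exp.comp_continuousOn
      (((h1'.sub h2').norm.pow 2).neg.div_const _)

lemma contOn_Icc_union {X : Type*} [TopologicalSpace X] {f : ℝ → X} {a b c : ℝ}
    (hab : a ≤ b) (hbc : b ≤ c)
    (h1 : ContinuousOn f (Icc a b)) (h2 : ContinuousOn f (Icc b c)) :
    ContinuousOn f (Icc a c) := by
  intro x hx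
  have hu : ContinuousWithinAt f (Icc a b ∪ Icc b c) x := by
    rcases lt_trichotomy x b with h | h | h
    · exact ((h1 x ⟨hx.1, h.le⟩).union
        (continuousWithinAt_of_notMem_closure (by
          rw [isClosed_Icc.closure_eq]; exact fun hm => absurd hm.1 (not_le.mpr h))))
    · subst h
      exact (h1 x ⟨hx.1, le_rfl⟩).union (h2 x ⟨le_rfl, hx.2⟩)
    · exact ContinuousWithinAt.union
        (continuousWithinAt_of_notMem_closure (by
          rw [isClosed_Icc.closure_eq]; exact fun hm => absurd hm.2 (not_le.mpr h)))
        (h2 x ⟨h.le, hx.2⟩)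
  exact hu.mono (by rw [Icc_union_Icc_eq_Icc hab hbc])

/-- Abstract version of `concat`. -/
noncomputable def pconcat (L₀ : ℝ) (f g : ℝ → E) : ℝ → E :=
  fun s => if s ≤ L₀ then f s else g (s - L₀)

lemma pconcat_eq_left {L₀ : ℝ} {f g : ℝ → E} {s : ℝ} (h : s ≤ L₀) :
    pconcat L₀ f g s = f s := if_pos h

lemma pconcat_eq_right {L₀ : ℝ} {f g : ℝ → E} {s : ℝ}
    (hfg : f L₀ = g 0) (h : L₀ ≤ s) : pconcat L₀ f g s = g (s - L₀) := by
  rcases eq_or_lt_of_le h with h' | h'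
  · subst h'; rw [pconcat_eq_left le_rfl, hfg, sub_self]
  · exact if_neg (not_le.mpr h')

lemma pconcat_contOn {L₀ L₁ : ℝ} (h0 : 0 ≤ L₀) (h1 : 0 ≤ L₁) {f g : ℝ → E}
    (hf : ContinuousOn f (Icc 0 L₀)) (hg : ContinuousOn g (Icc 0 L₁))
    (hfg : f L₀ = g 0) : ContinuousOn (pconcat L₀ f g) (Icc 0 (L₀ + L₁)) := by
  apply contOn_Icc_union h0 (le_add_of_nonneg_right h1)
  · exact hf.congr fun s hs => pconcat_eq_left hs.2
  · have hcomp : ContinuousOn (fun s => g (s - L₀)) (Icc L₀ (L₀ + L₁)) := by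
      apply hg.comp ((continuous_id.sub continuous_const).continuousOn)
      intro s hs
      have h1' := hs.1; have h2' := hs.2
      constructor <;> simp only [Pi.sub_apply, id_eq] <;> linarith
    exact hcomp.congr fun s hs => pconcat_eq_right hfg hs.1

/-- Continuity of the parameterized inner integral. -/
lemma contOn_param (σx σt p q : ℝ) {G G' : ℝ → E}
    (hG : ContinuousOn G (uIcc p q)) (hG' : ContinuousOn G' (uIcc p q))
    {S : Set ℝ} {F F' : ℝ → E}
    (hF : ContinuousOn F S) (hF' : ContinuousOn F' S) :
    ContinuousOn (fun s => ∫ t in p..q, ker σx σt (F s) (F' s) (G t) (G' t)) S := by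
  intro x₀ hx₀
  apply intervalIntegral.continuousWithinAt_of_dominated_interval
    (bound := fun _ => (1 : ℝ))
  · filter_upwards with x
    apply ContinuousOn.aestronglyMeasurable ?_ measurableSet_uIoc
    exact (ker_contOn_t σx σt (F x) (F' x) hG hG').mono uIoc_subset_uIcc
  · filter_upwards with x
    filter_upwards with t
    intro _; exact ker_norm_le_one
  · exact intervalIntegrable_const
  · filter_upwards with t
    intro _
    exact ker_cwa σx σt (G t) (G' t) (hF x₀ hx₀) (hF' x₀ hx₀)

/-- Abstract splitting lemma. -/
lemma vprod_split (σx σt La Lb Lc Le : ℝ)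
    (hLa : 0 ≤ La) (hLb : 0 ≤ Lb) (hLc : 0 ≤ Lc) (hLe : 0 ≤ Le)
    (fa fa' fb fb' gc gc' ge ge' : ℝ → E)
    (hfa : ContinuousOn fa (Icc 0 La)) (hfa' : ContinuousOn fa' (Icc 0 La))
    (hfb : ContinuousOn fb (Icc 0 Lb)) (hfb' : ContinuousOn fb' (Icc 0 Lb))
    (hgc : ContinuousOn gc (Icc 0 Lc)) (hgc' : ContinuousOn gc' (Icc 0 Lc))
    (hge : ContinuousOn ge (Icc 0 Le)) (hge' : ContinuousOn ge' (Icc 0 Le))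
    (hab : fa La = fb 0) (hab' : fa' La = fb' 0)
    (hce : gc Lc = ge 0) (hce' : gc' Lc = ge' 0) :
    (∫ s in (0:ℝ)..(La + Lb), ∫ t in (0:ℝ)..(Lc + Le),
        ker σx σt (pconcat La fa fb s) (pconcat La fa' fb' s)
          (pconcat Lc gc ge t) (pconcat Lc gc' ge' t))
      = (∫ s in (0:ℝ)..La, ∫ t in (0:ℝ)..Lc,
          ker σx σt (fa s) (fa' s) (gc t) (gc' t))
        + (∫ s in (0:ℝ)..La, ∫ t in (0:ℝ)..Le,
            ker σx σt (fa s) (fa' s) (ge t) (ge' t))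
        + (∫ s in (0:ℝ)..Lb, ∫ t in (0:ℝ)..Lc,
            ker σx σt (fb s) (fb' s) (gc t) (gc' t))
        + (∫ s in (0:ℝ)..Lb, ∫ t in (0:ℝ)..Le,
            ker σx σt (fb s) (fb' s) (ge t) (ge' t)) := by
  set Fγ := pconcat La fa fb with hFγdef
  set Fγ' := pconcat La fa' fb' with hFγ'def
  set Gγ := pconcat Lc gc ge with hGγdef
  set Gγ' := pconcat Lc gc' ge' with hGγ'def
  have hFγ : ContinuousOn Fγ (Icc 0 (La + Lb)) := pconcat_contOn hLa hLb hfa hfb hab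
  have hFγ' : ContinuousOn Fγ' (Icc 0 (La + Lb)) := pconcat_contOn hLa hLb hfa' hfb' hab'
  have hGγ : ContinuousOn Gγ (Icc 0 (Lc + Le)) := pconcat_contOn hLc hLe hgc hge hce
  have hGγ' : ContinuousOn Gγ' (Icc 0 (Lc + Le)) := pconcat_contOn hLc hLe hgc' hge' hce'
  set Ic : ℝ → ℝ := fun s => ∫ t in (0:ℝ)..Lc,
    ker σx σt (Fγ s) (Fγ' s) (gc t) (gc' t) with hIcdef
  set Ie : ℝ → ℝ := fun s => ∫ t in (0:ℝ)..Le,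
    ker σx σt (Fγ s) (Fγ' s) (ge t) (ge' t) with hIedef
  have stepA : ∀ s : ℝ,
      (∫ t in (0:ℝ)..(Lc + Le), ker σx σt (Fγ s) (Fγ' s) (Gγ t) (Gγ' t))
        = Ic s + Ie s := by
    intro s
    have hcont : ContinuousOn (fun t => ker σx σt (Fγ s) (Fγ' s) (Gγ t) (Gγ' t))
        (Icc 0 (Lc + Le)) := ker_contOn_t σx σt _ _ hGγ hGγ'
    have i1 : IntervalIntegrable (fun t => ker σx σt (Fγ s) (Fγ' s) (Gγ t) (Gγ' t))
        volume 0 Lc := by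
      apply ContinuousOn.intervalIntegrable
      apply hcont.mono
      rw [uIcc_of_le hLc]
      exact Icc_subset_Icc le_rfl (le_add_of_nonneg_right hLe)
    have i2 : IntervalIntegrable (fun t => ker σx σt (Fγ s) (Fγ' s) (Gγ t) (Gγ' t))
        volume Lc (Lc + Le) := by
      apply ContinuousOn.intervalIntegrable
      apply hcont.mono
      rw [uIcc_of_le (le_add_of_nonneg_right hLe)]
      exact Icc_subset_Icc hLc le_rfl
    rw [← intervalIntegral.integral_add_adjacent_intervals i1 i2]
    congr 1
    · apply intervalIntegral.integral_congr
      intro t ht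
      rw [uIcc_of_le hLc] at ht
      show ker σx σt (Fγ s) (Fγ' s) (Gγ t) (Gγ' t)
        = ker σx σt (Fγ s) (Fγ' s) (gc t) (gc' t)
      rw [hGγdef, hGγ'def, pconcat_eq_left ht.2, pconcat_eq_left ht.2]
    · have hcongr : ∀ t ∈ uIcc Lc (Lc + Le),
          ker σx σt (Fγ s) (Fγ' s) (Gγ t) (Gγ' t)
            = ker σx σt (Fγ s) (Fγ' s) (ge (t - Lc)) (ge' (t - Lc)) := by
        intro t ht
        rw [uIcc_of_le (le_add_of_nonneg_right hLe)] at ht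
        show ker σx σt (Fγ s) (Fγ' s) (Gγ t) (Gγ' t)
          = ker σx σt (Fγ s) (Fγ' s) (ge (t - Lc)) (ge' (t - Lc))
        rw [hGγdef, hGγ'def, pconcat_eq_right hce ht.1, pconcat_eq_right hce' ht.1]
      rw [intervalIntegral.integral_congr hcongr]
      have := intervalIntegral.integral_comp_sub_right
        (a := Lc) (b := Lc + Le)
        (fun t => ker σx σt (Fγ s) (Fγ' s) (ge t) (ge' t)) Lc
      simpa using this
  have hIcCont : ContinuousOn Ic (Icc 0 (La + Lb)) := by
    apply contOn_param σx σt 0 Lc _ _ hFγ hFγ'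
    · rw [uIcc_of_le hLc]; exact hgc
    · rw [uIcc_of_le hLc]; exact hgc'
  have hIeCont : ContinuousOn Ie (Icc 0 (La + Lb)) := by
    apply contOn_param σx σt 0 Le _ _ hFγ hFγ'
    · rw [uIcc_of_le hLe]; exact hge
    · rw [uIcc_of_le hLe]; exact hge'
  have iic1 : IntervalIntegrable Ic volume 0 La := by
    apply ContinuousOn.intervalIntegrable
    apply hIcCont.mono; rw [uIcc_of_le hLa]
    exact Icc_subset_Icc le_rfl (le_add_of_nonneg_right hLb)
  have iic2 : IntervalIntegrable Ic volume La (La + Lb) := by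
    apply ContinuousOn.intervalIntegrable
    apply hIcCont.mono; rw [uIcc_of_le (le_add_of_nonneg_right hLb)]
    exact Icc_subset_Icc hLa le_rfl
  have iie1 : IntervalIntegrable Ie volume 0 La := by
    apply ContinuousOn.intervalIntegrable
    apply hIeCont.mono; rw [uIcc_of_le hLa]
    exact Icc_subset_Icc le_rfl (le_add_of_nonneg_right hLb)
  have iie2 : IntervalIntegrable Ie volume La (La + Lb) := by
    apply ContinuousOn.intervalIntegrable
    apply hIeCont.mono; rw [uIcc_of_le (le_add_of_nonneg_right hLb)]
    exact Icc_subset_Icc hLa le_rfl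
  have hVc : (∫ s in (0:ℝ)..(La + Lb), ∫ t in (0:ℝ)..(Lc + Le),
      ker σx σt (Fγ s) (Fγ' s) (Gγ t) (Gγ' t))
      = ∫ s in (0:ℝ)..(La + Lb), (Ic s + Ie s) :=
    intervalIntegral.integral_congr fun s _ => stepA s
  rw [hVc, intervalIntegral.integral_add (iic1.trans iic2) (iie1.trans iie2)]
  rw [← intervalIntegral.integral_add_adjacent_intervals iic1 iic2]
  rw [← intervalIntegral.integral_add_adjacent_intervals iie1 iie2]
  have hfront : ∀ s ∈ uIcc (0:ℝ) La, Fγ s = fa s ∧ Fγ' s = fa' s := by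
    intro s hs
    rw [uIcc_of_le hLa] at hs
    exact ⟨pconcat_eq_left hs.2, pconcat_eq_left hs.2⟩
  have hback : ∀ s ∈ uIcc La (La + Lb),
      Fγ s = fb (s - La) ∧ Fγ' s = fb' (s - La) := by
    intro s hs
    rw [uIcc_of_le (le_add_of_nonneg_right hLb)] at hs
    exact ⟨pconcat_eq_right hab hs.1, pconcat_eq_right hab' hs.1⟩
  have p1 : (∫ s in (0:ℝ)..La, Ic s)
      = ∫ s in (0:ℝ)..La, ∫ t in (0:ℝ)..Lc, ker σx σt (fa s) (fa' s) (gc t) (gc' t) := by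
    apply intervalIntegral.integral_congr
    intro s hs
    obtain ⟨h1, h2⟩ := hfront s hs
    show (∫ t in (0:ℝ)..Lc, ker σx σt (Fγ s) (Fγ' s) (gc t) (gc' t)) = _
    rw [h1, h2]
  have p2 : (∫ s in (0:ℝ)..La, Ie s)
      = ∫ s in (0:ℝ)..La, ∫ t in (0:ℝ)..Le, ker σx σt (fa s) (fa' s) (ge t) (ge' t) := by
    apply intervalIntegral.integral_congr
    intro s hs
    obtain ⟨h1, h2⟩ := hfront s hs
    show (∫ t in (0:ℝ)..Le, ker σx σt (Fγ s) (Fγ' s) (ge t) (ge' t)) = _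
    rw [h1, h2]
  have p3 : (∫ s in La..(La + Lb), Ic s)
      = ∫ s in (0:ℝ)..Lb, ∫ t in (0:ℝ)..Lc, ker σx σt (fb s) (fb' s) (gc t) (gc' t) := by
    have hcongr : ∀ s ∈ uIcc La (La + Lb),
        Ic s = (fun u => ∫ t in (0:ℝ)..Lc,
          ker σx σt (fb u) (fb' u) (gc t) (gc' t)) (s - La) := by
      intro s hs
      obtain ⟨h1, h2⟩ := hback s hs
      show (∫ t in (0:ℝ)..Lc, ker σx σt (Fγ s) (Fγ' s) (gc t) (gc' t)) = _
      rw [h1, h2]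
    rw [intervalIntegral.integral_congr hcongr]
    have := intervalIntegral.integral_comp_sub_right
      (a := La) (b := La + Lb)
      (fun u => ∫ t in (0:ℝ)..Lc, ker σx σt (fb u) (fb' u) (gc t) (gc' t)) La
    simpa using this
  have p4 : (∫ s in La..(La + Lb), Ie s)
      = ∫ s in (0:ℝ)..Lb, ∫ t in (0:ℝ)..Le, ker σx σt (fb s) (fb' s) (ge t) (ge' t) := by
    have hcongr : ∀ s ∈ uIcc La (La + Lb),
        Ie s = (fun u => ∫ t in (0:ℝ)..Le,
          ker σx σt (fb u) (fb' u) (ge t) (ge' t)) (s - La) := by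
      intro s hs
      obtain ⟨h1, h2⟩ := hback s hs
      show (∫ t in (0:ℝ)..Le, ker σx σt (Fγ s) (Fγ' s) (ge t) (ge' t)) = _
      rw [h1, h2]
    rw [intervalIntegral.integral_congr hcongr]
    have := intervalIntegral.integral_comp_sub_right
      (a := La) (b := La + Lb)
      (fun u => ∫ t in (0:ℝ)..Le, ker σx σt (fb u) (fb' u) (ge t) (ge' t)) La
    simpa using this
  rw [p1, p2, p3, p4]; ring

set_option maxHeartbeats 1000000 in
/-- Abstract Fubini/symmetry lemma. -/
lemma vprod_swap (σx σt L₁ L₂ : ℝ) (h1 : 0 ≤ L₁) (h2 : 0 ≤ L₂)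
    (A A' B B' : ℝ → E)
    (hA : ContinuousOn A (Icc 0 L₁)) (hA' : ContinuousOn A' (Icc 0 L₁))
    (hB : ContinuousOn B (Icc 0 L₂)) (hB' : ContinuousOn B' (Icc 0 L₂)) :
    (∫ s in (0:ℝ)..L₁, ∫ t in (0:ℝ)..L₂, ker σx σt (A s) (A' s) (B t) (B' t))
      = ∫ t in (0:ℝ)..L₂, ∫ s in (0:ℝ)..L₁, ker σx σt (B t) (B' t) (A s) (A' s) := by
  have hcont : ContinuousOn
      (fun p : ℝ × ℝ => ker σx σt (A p.1) (A' p.1) (B p.2) (B' p.2))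
      (Icc 0 L₁ ×ˢ Icc 0 L₂) := ker_contOn_prod σx σt hA hA' hB hB'
  have hint : Integrable
      (Function.uncurry fun s t => ker σx σt (A s) (A' s) (B t) (B' t))
      ((volume.restrict (Ioc (0:ℝ) L₁)).prod (volume.restrict (Ioc (0:ℝ) L₂))) := by
    rw [Measure.prod_restrict]
    have hK : IsCompact (Icc (0:ℝ) L₁ ×ˢ Icc (0:ℝ) L₂) := isCompact_Icc.prod isCompact_Icc
    have h := hcont.integrableOn_compact (μ := (volume : Measure (ℝ × ℝ))) hK
    rw [Measure.volume_eq_prod] at h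
    exact h.mono_set (prod_mono Ioc_subset_Icc_self Ioc_subset_Icc_self)
  have swap := MeasureTheory.integral_integral_swap hint
  rw [intervalIntegral.integral_of_le h1, intervalIntegral.integral_of_le h2]
  have e1 : ∀ s : ℝ, (∫ t in (0:ℝ)..L₂, ker σx σt (A s) (A' s) (B t) (B' t))
      = ∫ t in Ioc (0:ℝ) L₂, ker σx σt (A s) (A' s) (B t) (B' t) :=
    fun s => intervalIntegral.integral_of_le h2
  have e2 : ∀ t : ℝ, (∫ s in (0:ℝ)..L₁, ker σx σt (B t) (B' t) (A s) (A' s))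
      = ∫ s in Ioc (0:ℝ) L₁, ker σx σt (A s) (A' s) (B t) (B' t) := by
    intro t
    rw [intervalIntegral.integral_of_le h1]
    congr 1; funext s; exact ker_symm
  simp_rw [e1, e2]
  exact swap

end Abstract

/-! ### Concrete wrappers -/

lemma concat_eq_pconcat {d : ℕ} (L₀ : ℝ) (f g : ℝ → EuclideanSpace ℝ (Fin d)) :
    concat L₀ f g = pconcat L₀ f g := rfl

lemma vprod_eq_ker (d : ℕ) (σx σt L₁ L₂ : ℝ) (f f' g g' : ℝ → EuclideanSpace ℝ (Fin d)) :
    vprod d σx σt L₁ L₂ f f' g g' =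
      ∫ s in (0:ℝ)..L₁, ∫ t in (0:ℝ)..L₂, ker σx σt (f s) (f' s) (g t) (g' t) := rfl

lemma UnitSpeedCurve.contOn {d : ℕ} (c : UnitSpeedCurve d) :
    ContinuousOn c.γ (Icc 0 c.L) :=
  fun s hs => (c.hasDeriv s hs).continuousWithinAt

lemma Vconcat_split {d : ℕ} (σx σt : ℝ) (a b c e : UnitSpeedCurve d)
    (hb : b.γ 0 = a.γ a.L) (hb' : b.γ' 0 = a.γ' a.L)
    (he : e.γ 0 = c.γ c.L) (he' : e.γ' 0 = c.γ' c.L) :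
    Vconcat σx σt a b c e =
      V σx σt a c + V σx σt a e + V σx σt b c + V σx σt b e := by
  rw [Vconcat, vprod_eq_ker, concat_eq_pconcat, concat_eq_pconcat, concat_eq_pconcat,
    concat_eq_pconcat,
    V, vprod_eq_ker, V, vprod_eq_ker, V, vprod_eq_ker, V, vprod_eq_ker]
  exact vprod_split σx σt a.L b.L c.L e.L a.L_pos.le b.L_pos.le c.L_pos.le e.L_pos.le
    a.γ a.γ' b.γ b.γ' c.γ c.γ' e.γ e.γ'
    a.contOn a.contDeriv b.contOn b.contDeriv c.contOn c.contDeriv e.contOn e.contDeriv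
    hb.symm hb'.symm he.symm he'.symm

lemma V_symm {d : ℕ} (σx σt : ℝ) (c₁ c₂ : UnitSpeedCurve d) :
    V σx σt c₁ c₂ = V σx σt c₂ c₁ := by
  rw [V, vprod_eq_ker, V, vprod_eq_ker]
  exact vprod_swap σx σt c₁.L c₂.L c₁.L_pos.le c₂.L_pos.le
    c₁.γ c₁.γ' c₂.γ c₂.γ' c₁.contOn c₁.contDeriv c₂.contOn c₂.contDeriv

/-- **Exact cancellation of the common trunk.** For a unit-speed curve `α` and unit-speed
curves `β₁, β₂` emanating from the endpoint of `α` (same point, same direction), the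
squared varifold distance between the concatenations satisfies
`Δ(α⊕β₁, α⊕β₂) = V(β₁,β₁) + V(β₂,β₂) − 2·V(β₁,β₂)` for all `σx, σt > 0`. -/
theorem deltaConcat_eq_delta_branches {d : ℕ} (a b₁ b₂ : UnitSpeedCurve d)
    (hpt₁ : b₁.γ 0 = a.γ a.L) (hpt₂ : b₂.γ 0 = a.γ a.L)
    (hdir₁ : b₁.γ' 0 = a.γ' a.L) (hdir₂ : b₂.γ' 0 = a.γ' a.L) :
    ∀ σx > (0:ℝ), ∀ σt > (0:ℝ),
      Vconcat σx σt a b₁ a b₁ + Vconcat σx σt a b₂ a b₂ - 2 * Vconcat σx σt a b₁ a b₂ =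
        V σx σt b₁ b₁ + V σx σt b₂ b₂ - 2 * V σx σt b₁ b₂ := by
  intro σx _ σt _
  rw [Vconcat_split σx σt a b₁ a b₁ hpt₁ hdir₁ hpt₁ hdir₁,
      Vconcat_split σx σt a b₂ a b₂ hpt₂ hdir₂ hpt₂ hdir₂,
      Vconcat_split σx σt a b₁ a b₂ hpt₁ hdir₁ hpt₂ hdir₂,
      V_symm σx σt b₁ a, V_symm σx σt b₂ a]
  ring
end

section
/- Let α : [0,L₀] → ℝ^d and β : [0,L₁] → ℝ^d be unit-speed curves with α(L₀) = β(0) and α'(L₀) = β'(0). Then for all σ_x, σ_t > 0, Δ(α, α⊕β) = V(β,β). -/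
open Set MeasureTheory

/-! ### Auxiliary machinery -/

variable {d : ℕ}

/-- The Gaussian kernel. -/
noncomputable def K (σx σt : ℝ) (p p' q q' : EuclideanSpace ℝ (Fin d)) : ℝ :=
  Real.exp (-‖p - q‖ ^ 2 / σx ^ 2) * Real.exp (-‖p' - q'‖ ^ 2 / σt ^ 2)

lemma K_symm (σx σt : ℝ) (p p' q q' : EuclideanSpace ℝ (Fin d)) :
    K σx σt p p' q q' = K σx σt q q' p p' := by
  unfold K; rw [norm_sub_rev p q, norm_sub_rev p' q']

lemma K_cont {σx σt : ℝ} {f f' g g' : ℝ → EuclideanSpace ℝ (Fin d)}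
    (hf : Continuous f) (hf' : Continuous f') (hg : Continuous g) (hg' : Continuous g') :
    Continuous (fun p : ℝ × ℝ => K σx σt (f p.1) (f' p.1) (g p.2) (g' p.2)) := by
  unfold K; fun_prop

lemma vprod_eq (σx σt L M : ℝ) (f f' g g' : ℝ → EuclideanSpace ℝ (Fin d)) :
    vprod d σx σt L M f f' g g' =
      ∫ s in (0:ℝ)..L, ∫ t in (0:ℝ)..M, K σx σt (f s) (f' s) (g t) (g' t) := rfl

lemma vprod_congr {σx σt L M : ℝ} {f f' g g' F F' G G' : ℝ → EuclideanSpace ℝ (Fin d)}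
    (hf : EqOn f F (uIcc 0 L)) (hf' : EqOn f' F' (uIcc 0 L))
    (hg : EqOn g G (uIcc 0 M)) (hg' : EqOn g' G' (uIcc 0 M)) :
    vprod d σx σt L M f f' g g' = vprod d σx σt L M F F' G G' := by
  rw [vprod_eq, vprod_eq]
  apply intervalIntegral.integral_congr
  intro s hs
  beta_reduce
  rw [hf hs, hf' hs]
  apply intervalIntegral.integral_congr
  intro t ht
  show K σx σt (F s) (F' s) (g t) (g' t) = _
  rw [hg ht, hg' ht]

lemma inner_cont {σx σt : ℝ} {f f' g g' : ℝ → EuclideanSpace ℝ (Fin d)}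
    (hf : Continuous f) (hf' : Continuous f') (hg : Continuous g) (hg' : Continuous g')
    (M : ℝ) :
    Continuous fun s => ∫ t in (0:ℝ)..M, K σx σt (f s) (f' s) (g t) (g' t) :=
  intervalIntegral.continuous_parametric_intervalIntegral_of_continuous'
    (f := fun s t => K σx σt (f s) (f' s) (g t) (g' t)) (K_cont hf hf' hg hg') 0 M

lemma split_left {σx σt : ℝ} {f f' g g' : ℝ → EuclideanSpace ℝ (Fin d)}
    (hf : Continuous f) (hf' : Continuous f') (hg : Continuous g) (hg' : Continuous g')
    (L₀ L₁ M : ℝ) :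
    vprod d σx σt (L₀ + L₁) M f f' g g' =
      vprod d σx σt L₀ M f f' g g' +
        vprod d σx σt L₁ M (fun s => f (s + L₀)) (fun s => f' (s + L₀)) g g' := by
  rw [vprod_eq, vprod_eq, vprod_eq]
  have hF := inner_cont (d := d) (σx := σx) (σt := σt) hf hf' hg hg' M
  rw [← intervalIntegral.integral_add_adjacent_intervals (a := (0:ℝ)) (b := L₀)
    (c := L₀ + L₁) (hF.intervalIntegrable 0 L₀) (hF.intervalIntegrable L₀ (L₀ + L₁))]
  congr 1
  rw [intervalIntegral.integral_comp_add_right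
    (fun s => ∫ t in (0:ℝ)..M, K σx σt (f s) (f' s) (g t) (g' t)) L₀, zero_add, add_comm L₁ L₀]

lemma split_right {σx σt : ℝ} {f f' g g' : ℝ → EuclideanSpace ℝ (Fin d)}
    (hf : Continuous f) (hf' : Continuous f') (hg : Continuous g) (hg' : Continuous g')
    (L M₀ M₁ : ℝ) :
    vprod d σx σt L (M₀ + M₁) f f' g g' =
      vprod d σx σt L M₀ f f' g g' +
        vprod d σx σt L M₁ f f' (fun t => g (t + M₀)) (fun t => g' (t + M₀)) := by
  rw [vprod_eq, vprod_eq, vprod_eq]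
  rw [← intervalIntegral.integral_add
    ((inner_cont (d := d) (σx := σx) (σt := σt) hf hf' hg hg' M₀).intervalIntegrable 0 L)
    ((inner_cont (d := d) (σx := σx) (σt := σt) hf hf'
      (show Continuous fun t => g (t + M₀) from hg.comp (by fun_prop))
      (show Continuous fun t => g' (t + M₀) from hg'.comp (by fun_prop)) M₁).intervalIntegrable 0 L)]
  apply intervalIntegral.integral_congr
  intro s _
  beta_reduce
  have hG : Continuous fun t => K σx σt (f s) (f' s) (g t) (g' t) := by
    unfold K; fun_prop
  rw [← intervalIntegral.integral_add_adjacent_intervals (a := (0:ℝ)) (b := M₀)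
    (c := M₀ + M₁) (hG.intervalIntegrable 0 M₀) (hG.intervalIntegrable M₀ (M₀ + M₁))]
  congr 1
  rw [intervalIntegral.integral_comp_add_right
    (fun t => K σx σt (f s) (f' s) (g t) (g' t)) M₀, zero_add, add_comm M₁ M₀]

lemma vswap {σx σt : ℝ} {f f' g g' : ℝ → EuclideanSpace ℝ (Fin d)}
    (hf : Continuous f) (hf' : Continuous f') (hg : Continuous g) (hg' : Continuous g')
    {L M : ℝ} (hL : 0 ≤ L) (hM : 0 ≤ M) :
    vprod d σx σt L M f f' g g' = vprod d σx σt M L g g' f f' := by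
  rw [vprod_eq, vprod_eq]
  simp only [intervalIntegral.integral_of_le hL, intervalIntegral.integral_of_le hM]
  have hint : Integrable (Function.uncurry fun s t => K σx σt (f s) (f' s) (g t) (g' t))
      ((volume.restrict (Ioc (0:ℝ) L)).prod (volume.restrict (Ioc (0:ℝ) M))) := by
    rw [Measure.prod_restrict]
    have h1 : IntegrableOn
        (Function.uncurry fun s t => K σx σt (f s) (f' s) (g t) (g' t))
        (Icc (0:ℝ) L ×ˢ Icc (0:ℝ) M) (volume.prod volume) :=
      (K_cont hf hf' hg hg').continuousOn.integrableOn_compact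
        (isCompact_Icc.prod isCompact_Icc)
    exact h1.mono_set (prod_mono Ioc_subset_Icc_self Ioc_subset_Icc_self)
  have hswap := MeasureTheory.integral_integral_swap hint
  rw [show (fun t => ∫ s in Ioc (0:ℝ) L, K σx σt (g t) (g' t) (f s) (f' s)) =
      fun t => ∫ s in Ioc (0:ℝ) L, K σx σt (f s) (f' s) (g t) (g' t) from
    funext fun t => by simp_rw [K_symm σx σt (g t) (g' t)]]
  exact hswap

/-- Clamped extension of a map to all of `ℝ`. -/
noncomputable def cext (L : ℝ) (f : ℝ → EuclideanSpace ℝ (Fin d)) :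
    ℝ → EuclideanSpace ℝ (Fin d) :=
  fun x => f (min L (max 0 x))

lemma cext_cont {L : ℝ} {f : ℝ → EuclideanSpace ℝ (Fin d)} (hL : 0 ≤ L)
    (hf : ContinuousOn f (Icc 0 L)) : Continuous (cext L f) := by
  apply hf.comp_continuous (by fun_prop)
  intro x
  exact ⟨le_min hL (le_max_left 0 x), min_le_left _ _⟩

lemma cext_eq {L x : ℝ} {f : ℝ → EuclideanSpace ℝ (Fin d)} (hx : x ∈ Icc 0 L) :
    cext L f x = f x := by
  unfold cext; rw [max_eq_right hx.1, min_eq_right hx.2]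

lemma concat_cont {L₀ : ℝ} {f g : ℝ → EuclideanSpace ℝ (Fin d)}
    (hf : Continuous f) (hg : Continuous g) (h : f L₀ = g 0) :
    Continuous (concat L₀ f g) := by
  unfold concat
  apply Continuous.if_le hf (hg.comp (by fun_prop)) continuous_id continuous_const
  intro x hx
  subst hx
  simpa using h


/-- **Extension identity.** For unit-speed curves `α` and `β` with `β` emanating from the
endpoint of `α` (same point, same direction), the squared varifold distance between `α`
and the concatenation `α ⊕ β` equals `V(β,β)` for all `σx, σt > 0`. -/
theorem delta_curve_extension {d : ℕ} (a b : UnitSpeedCurve d)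
    (hpt : b.γ 0 = a.γ a.L) (hdir : b.γ' 0 = a.γ' a.L) :
    ∀ σx > (0:ℝ), ∀ σt > (0:ℝ),
      V σx σt a a + Vconcat σx σt a b a b
          - 2 * vprod d σx σt a.L (a.L + b.L) a.γ a.γ'
              (concat a.L a.γ b.γ) (concat a.L a.γ' b.γ') =
        V σx σt b b := by
  intro σx _ σt _
  have h0 : (0:ℝ) ≤ a.L := a.L_pos.le
  have h1 : (0:ℝ) ≤ b.L := b.L_pos.le
  have haγ : ContinuousOn a.γ (Icc 0 a.L) := fun s hs => (a.hasDeriv s hs).continuousWithinAt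
  have hbγ : ContinuousOn b.γ (Icc 0 b.L) := fun s hs => (b.hasDeriv s hs).continuousWithinAt
  set A := cext a.L a.γ with hA
  set A' := cext a.L a.γ' with hA'
  set B := cext b.L b.γ with hB
  set B' := cext b.L b.γ' with hB'
  have hAc : Continuous A := cext_cont h0 haγ
  have hA'c : Continuous A' := cext_cont h0 a.contDeriv
  have hBc : Continuous B := cext_cont h1 hbγ
  have hB'c : Continuous B' := cext_cont h1 b.contDeriv
  have hendA : a.L ∈ Icc (0:ℝ) a.L := ⟨h0, le_refl _⟩
  have hz : (0:ℝ) ∈ Icc (0:ℝ) b.L := ⟨le_refl _, h1⟩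
  set C := concat a.L A B with hC
  set C' := concat a.L A' B' with hC'
  have hCc : Continuous C := by
    apply concat_cont hAc hBc
    rw [hA, hB, cext_eq hendA, cext_eq hz, hpt]
  have hC'c : Continuous C' := by
    apply concat_cont hA'c hB'c
    rw [hA', hB', cext_eq hendA, cext_eq hz, hdir]
  have hCsc : Continuous fun s => C (s + a.L) := hCc.comp (by fun_prop)
  have hC'sc : Continuous fun s => C' (s + a.L) := hC'c.comp (by fun_prop)
  -- EqOn facts
  have eA : EqOn a.γ C (uIcc 0 a.L) := by
    rw [uIcc_of_le h0]
    intro s hs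
    show a.γ s = concat a.L A B s
    unfold concat
    rw [if_pos hs.2, hA, cext_eq hs]
  have eA' : EqOn a.γ' C' (uIcc 0 a.L) := by
    rw [uIcc_of_le h0]
    intro s hs
    show a.γ' s = concat a.L A' B' s
    unfold concat
    rw [if_pos hs.2, hA', cext_eq hs]
  have eB : EqOn b.γ (fun s => C (s + a.L)) (uIcc 0 b.L) := by
    rw [uIcc_of_le h1]
    intro t ht
    show b.γ t = concat a.L A B (t + a.L)
    unfold concat
    rcases eq_or_lt_of_le ht.1 with h | h
    · rw [if_pos (by linarith), ← h, zero_add, hA, cext_eq hendA, hpt]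
    · rw [if_neg (by simp; linarith), add_sub_cancel_right, hB, cext_eq ⟨ht.1, ht.2⟩]
  have eB' : EqOn b.γ' (fun s => C' (s + a.L)) (uIcc 0 b.L) := by
    rw [uIcc_of_le h1]
    intro t ht
    show b.γ' t = concat a.L A' B' (t + a.L)
    unfold concat
    rcases eq_or_lt_of_le ht.1 with h | h
    · rw [if_pos (by linarith), ← h, zero_add, hA', cext_eq hendA, hdir]
    · rw [if_neg (by simp; linarith), add_sub_cancel_right, hB', cext_eq ⟨ht.1, ht.2⟩]
  have eCC : EqOn (concat a.L a.γ b.γ) C (uIcc 0 (a.L + b.L)) := by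
    rw [uIcc_of_le (by linarith)]
    intro s hs
    show concat a.L a.γ b.γ s = concat a.L A B s
    unfold concat
    by_cases h : s ≤ a.L
    · rw [if_pos h, if_pos h, hA, cext_eq ⟨hs.1, h⟩]
    · rw [if_neg h, if_neg h, hB, cext_eq ⟨by simp at h; linarith, by linarith [hs.2]⟩]
  have eCC' : EqOn (concat a.L a.γ' b.γ') C' (uIcc 0 (a.L + b.L)) := by
    rw [uIcc_of_le (by linarith)]
    intro s hs
    show concat a.L a.γ' b.γ' s = concat a.L A' B' s
    unfold concat
    by_cases h : s ≤ a.L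
    · rw [if_pos h, if_pos h, hA', cext_eq ⟨hs.1, h⟩]
    · rw [if_neg h, if_neg h, hB', cext_eq ⟨by simp at h; linarith, by linarith [hs.2]⟩]
  -- rewrite all quantities in terms of C, C'
  set T00 := vprod d σx σt a.L a.L C C' C C' with hT00
  set T01 := vprod d σx σt a.L b.L C C'
    (fun t => C (t + a.L)) (fun t => C' (t + a.L)) with hT01
  set T10 := vprod d σx σt b.L a.L
    (fun t => C (t + a.L)) (fun t => C' (t + a.L)) C C' with hT10
  set T11 := vprod d σx σt b.L b.L (fun t => C (t + a.L)) (fun t => C' (t + a.L))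
    (fun t => C (t + a.L)) (fun t => C' (t + a.L)) with hT11
  have hVaa : V σx σt a a = T00 := vprod_congr eA eA' eA eA'
  have hVbb : V σx σt b b = T11 := vprod_congr eB eB' eB eB'
  have hVcc : Vconcat σx σt a b a b = T00 + T01 + (T10 + T11) := by
    unfold Vconcat
    rw [vprod_congr eCC eCC' eCC eCC', split_left hCc hC'c hCc hC'c,
      split_right hCc hC'c hCc hC'c, split_right hCsc hC'sc hCc hC'c]
  have hcross : vprod d σx σt a.L (a.L + b.L) a.γ a.γ'
      (concat a.L a.γ b.γ) (concat a.L a.γ' b.γ') = T00 + T01 := by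
    rw [vprod_congr eA eA' eCC eCC', split_right hCc hC'c hCc hC'c]
  have hsw : T10 = T01 := vswap hCsc hC'sc hCc hC'c h1 h0
  rw [hVaa, hVbb, hVcc, hcross, hsw]
  ring
end

section
/- Let γ₁ : [0,L₁] → ℝ^d and γ₂ : [0,L₂] → ℝ^d be unit-speed curves and fix σ_x, σ_t > 0. Let (φ_n) be a sequence of continuously differentiable maps ℝ^d → ℝ^d such that sup_{x∈ℝ^d} ‖φ_n(x) − x‖ → 0 and sup_{x∈ℝ^d} ‖Dφ_n(x) − I‖ → 0 as n → ∞ (in particular Dφ_n(γ₂(t))·γ₂'(t) ≠ 0 for all t and all sufficiently large n). Then d²(γ₁, φ_n·γ₂) → Δ(γ₁, γ₂) as n → ∞. -/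
open Set MeasureTheory

/-- The unit tangent direction of the curve `c` deformed by `φ`:
`w(t) = Dφ(γ(t))·γ'(t) / ‖Dφ(γ(t))·γ'(t)‖`. -/
noncomputable def deformedDir {d : ℕ} (φ : EuclideanSpace ℝ (Fin d) → EuclideanSpace ℝ (Fin d))
    (c : UnitSpeedCurve d) (t : ℝ) : EuclideanSpace ℝ (Fin d) :=
  ‖fderiv ℝ φ (c.γ t) (c.γ' t)‖⁻¹ • fderiv ℝ φ (c.γ t) (c.γ' t)

/-- The Gaussian varifold inner product `V(γ₁, φ·γ₂)` between `γ₁` and the deformation of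
`γ₂` by `φ`. -/
noncomputable def Vdeform {d : ℕ} (σx σt : ℝ) (c₁ c₂ : UnitSpeedCurve d)
    (φ : EuclideanSpace ℝ (Fin d) → EuclideanSpace ℝ (Fin d)) : ℝ :=
  ∫ s in (0:ℝ)..c₁.L, ∫ t in (0:ℝ)..c₂.L,
    Real.exp (-‖c₁.γ s - φ (c₂.γ t)‖ ^ 2 / σx ^ 2)
      * Real.exp (-‖c₁.γ' s - deformedDir φ c₂ t‖ ^ 2 / σt ^ 2)
      * ‖fderiv ℝ φ (c₂.γ t) (c₂.γ' t)‖

/-- The Gaussian varifold self inner product `V(φ·γ₂, φ·γ₂)` of the deformation of `γ₂`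
by `φ`. -/
noncomputable def VdeformSelf {d : ℕ} (σx σt : ℝ) (c₂ : UnitSpeedCurve d)
    (φ : EuclideanSpace ℝ (Fin d) → EuclideanSpace ℝ (Fin d)) : ℝ :=
  ∫ s in (0:ℝ)..c₂.L, ∫ t in (0:ℝ)..c₂.L,
    Real.exp (-‖φ (c₂.γ s) - φ (c₂.γ t)‖ ^ 2 / σx ^ 2)
      * Real.exp (-‖deformedDir φ c₂ s - deformedDir φ c₂ t‖ ^ 2 / σt ^ 2)
      * (‖fderiv ℝ φ (c₂.γ s) (c₂.γ' s)‖ * ‖fderiv ℝ φ (c₂.γ t) (c₂.γ' t)‖)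

section AuxVarifold
open Filter

private lemma tendsto_zero_of_le_aux {g : ℕ → ℝ} (hg0 : ∀ n, 0 ≤ g n)
    (hg : ∀ ε > (0:ℝ), ∃ N, ∀ n ≥ N, g n ≤ ε) : Filter.Tendsto g Filter.atTop (nhds 0) := by
  rw [Metric.tendsto_atTop]
  intro ε hε
  obtain ⟨N, hN⟩ := hg (ε/2) (by linarith)
  refine ⟨N, fun n hn => ?_⟩
  rw [Real.dist_eq, sub_zero, abs_of_nonneg (hg0 n)]
  linarith [hN n hn]

private lemma tendsto_intervalIntegral₂_aux {F : ℕ → ℝ → ℝ → ℝ} {f : ℝ → ℝ → ℝ} {L₁ L₂ C : ℝ}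
    (hL₁ : 0 ≤ L₁) (hL₂ : 0 ≤ L₂)
    (hcont : ∀ᶠ n in atTop, ContinuousOn (fun p : ℝ × ℝ => F n p.1 p.2)
      (Icc 0 L₁ ×ˢ Icc 0 L₂))
    (hbound : ∀ᶠ n in atTop, ∀ s ∈ Icc (0:ℝ) L₁, ∀ t ∈ Icc (0:ℝ) L₂, |F n s t| ≤ C)
    (hlim : ∀ s ∈ Icc (0:ℝ) L₁, ∀ t ∈ Icc (0:ℝ) L₂,
      Tendsto (fun n => F n s t) atTop (nhds (f s t))) :
    Tendsto (fun n => ∫ s in (0:ℝ)..L₁, ∫ t in (0:ℝ)..L₂, F n s t) atTop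
      (nhds (∫ s in (0:ℝ)..L₁, ∫ t in (0:ℝ)..L₂, f s t)) := by
  have hI1 : uIoc (0:ℝ) L₁ = Ioc 0 L₁ := uIoc_of_le hL₁
  have hI2 : uIoc (0:ℝ) L₂ = Ioc 0 L₂ := uIoc_of_le hL₂
  apply intervalIntegral.tendsto_integral_filter_of_dominated_convergence
    (bound := fun _ => C * |L₂ - 0|)
  · filter_upwards [hcont, hbound] with n hc hb
    have conts : ContinuousOn (fun s => ∫ t in (0:ℝ)..L₂, F n s t) (Icc 0 L₁) := by
      intro s₀ hs₀
      apply intervalIntegral.continuousWithinAt_of_dominated_interval (bound := fun _ => C)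
      · filter_upwards [self_mem_nhdsWithin] with x hx
        have : ContinuousOn (fun t => F n x t) (Icc 0 L₂) :=
          hc.comp (continuous_const.prodMk continuous_id).continuousOn
            (fun t ht => ⟨hx, ht⟩)
        rw [hI2]
        exact (this.mono Ioc_subset_Icc_self).aestronglyMeasurable measurableSet_Ioc
      · filter_upwards [self_mem_nhdsWithin] with x hx
        refine ae_of_all _ fun t ht => ?_
        rw [hI2] at ht
        simpa [Real.norm_eq_abs] using hb x hx t (Ioc_subset_Icc_self ht)
      · exact intervalIntegrable_const
      · refine ae_of_all _ fun t ht => ?_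
        rw [hI2] at ht
        exact (hc.comp (continuous_id.prodMk continuous_const).continuousOn
          (fun x hx => ⟨hx, Ioc_subset_Icc_self ht⟩)) s₀ hs₀
    rw [hI1]
    exact (conts.mono Ioc_subset_Icc_self).aestronglyMeasurable measurableSet_Ioc
  · filter_upwards [hbound] with n hb
    refine ae_of_all _ fun s hs => ?_
    rw [hI1] at hs
    apply intervalIntegral.norm_integral_le_of_norm_le_const
    intro t ht
    rw [hI2] at ht
    simpa [Real.norm_eq_abs] using hb s (Ioc_subset_Icc_self hs) t (Ioc_subset_Icc_self ht)
  · exact intervalIntegrable_const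
  · refine ae_of_all _ fun s hs => ?_
    rw [hI1] at hs
    apply intervalIntegral.tendsto_integral_filter_of_dominated_convergence
      (bound := fun _ => C)
    · filter_upwards [hcont] with n hc
      have : ContinuousOn (fun t => F n s t) (Icc 0 L₂) :=
        hc.comp (continuous_const.prodMk continuous_id).continuousOn
          (fun t ht => ⟨Ioc_subset_Icc_self hs, ht⟩)
      rw [hI2]
      exact (this.mono Ioc_subset_Icc_self).aestronglyMeasurable measurableSet_Ioc
    · filter_upwards [hbound] with n hb
      refine ae_of_all _ fun t ht => ?_
      rw [hI2] at ht
      simpa [Real.norm_eq_abs] using hb s (Ioc_subset_Icc_self hs) t (Ioc_subset_Icc_self ht)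
    · exact intervalIntegrable_const
    · refine ae_of_all _ fun t ht => ?_
      rw [hI2] at ht
      exact hlim s (Ioc_subset_Icc_self hs) t (Ioc_subset_Icc_self ht)

end AuxVarifold

/-- **Robustness of the squared varifold distance to small diffeomorphic deformations.**
If `φ_n` is a sequence of C¹ maps with `sup_x ‖φ_n(x) − x‖ → 0` and
`sup_x ‖Dφ_n(x) − I‖ → 0` (so that in particular `Dφ_n(γ₂(t))·γ₂'(t) ≠ 0` for all `t`
and all sufficiently large `n`), then `d²(γ₁, φ_n·γ₂) → Δ(γ₁,γ₂)`. -/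

theorem deformed_distance_tendsto {d : ℕ} (c₁ c₂ : UnitSpeedCurve d) (σx σt : ℝ)
    (hσx : 0 < σx) (hσt : 0 < σt)
    (φ : ℕ → EuclideanSpace ℝ (Fin d) → EuclideanSpace ℝ (Fin d))
    (hC1 : ∀ n, ContDiff ℝ 1 (φ n))
    (hsup : ∀ ε > (0:ℝ), ∃ N : ℕ, ∀ n ≥ N, ∀ x, ‖φ n x - x‖ ≤ ε)
    (hdsup : ∀ ε > (0:ℝ), ∃ N : ℕ, ∀ n ≥ N, ∀ x,
      ‖fderiv ℝ (φ n) x - ContinuousLinearMap.id ℝ (EuclideanSpace ℝ (Fin d))‖ ≤ ε)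
    (hne : ∃ N : ℕ, ∀ n ≥ N, ∀ t ∈ Set.Icc (0:ℝ) c₂.L,
      fderiv ℝ (φ n) (c₂.γ t) (c₂.γ' t) ≠ 0) :
    Filter.Tendsto
      (fun n => V σx σt c₁ c₁ + VdeformSelf σx σt c₂ (φ n) - 2 * Vdeform σx σt c₁ c₂ (φ n))
      Filter.atTop
      (nhds (V σx σt c₁ c₁ + V σx σt c₂ c₂ - 2 * V σx σt c₁ c₂)) := by
  clear hne
  have hγ1 : ContinuousOn c₁.γ (Set.Icc 0 c₁.L) :=
    fun s hs => (c₁.hasDeriv s hs).continuousWithinAt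
  have hγ2 : ContinuousOn c₂.γ (Set.Icc 0 c₂.L) :=
    fun s hs => (c₂.hasDeriv s hs).continuousWithinAt
  -- pointwise limits
  have hφlim : ∀ x, Filter.Tendsto (fun n => φ n x) Filter.atTop (nhds x) := by
    intro x
    rw [tendsto_iff_norm_sub_tendsto_zero]
    exact tendsto_zero_of_le_aux (fun n => norm_nonneg _)
      (fun ε hε => (hsup ε hε).imp fun N hN n hn => hN n hn x)
  have hDlim : ∀ x, Filter.Tendsto
      (fun n => ‖fderiv ℝ (φ n) x - ContinuousLinearMap.id ℝ (EuclideanSpace ℝ (Fin d))‖)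
      Filter.atTop (nhds 0) := by
    intro x
    exact tendsto_zero_of_le_aux (fun n => norm_nonneg _)
      (fun ε hε => (hdsup ε hε).imp fun N hN n hn => hN n hn x)
  have hkey : ∀ n, ∀ t ∈ Set.Icc (0:ℝ) c₂.L,
      ‖fderiv ℝ (φ n) (c₂.γ t) (c₂.γ' t) - c₂.γ' t‖
        ≤ ‖fderiv ℝ (φ n) (c₂.γ t) - ContinuousLinearMap.id ℝ (EuclideanSpace ℝ (Fin d))‖ := by
    intro n t ht
    have heq : fderiv ℝ (φ n) (c₂.γ t) (c₂.γ' t) - c₂.γ' t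
        = (fderiv ℝ (φ n) (c₂.γ t) - ContinuousLinearMap.id ℝ (EuclideanSpace ℝ (Fin d)))
            (c₂.γ' t) := by simp
    rw [heq]
    calc ‖_‖ ≤ ‖fderiv ℝ (φ n) (c₂.γ t)
        - ContinuousLinearMap.id ℝ (EuclideanSpace ℝ (Fin d))‖ * ‖c₂.γ' t‖ :=
          ContinuousLinearMap.le_opNorm _ _
      _ = _ := by rw [c₂.unitSpeed t ht, mul_one]
  have hvlim : ∀ t ∈ Set.Icc (0:ℝ) c₂.L,
      Filter.Tendsto (fun n => fderiv ℝ (φ n) (c₂.γ t) (c₂.γ' t)) Filter.atTop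
        (nhds (c₂.γ' t)) := by
    intro t ht
    rw [tendsto_iff_norm_sub_tendsto_zero]
    exact squeeze_zero (fun n => norm_nonneg _) (fun n => hkey n t ht) (hDlim _)
  have hnormlim : ∀ t ∈ Set.Icc (0:ℝ) c₂.L,
      Filter.Tendsto (fun n => ‖fderiv ℝ (φ n) (c₂.γ t) (c₂.γ' t)‖) Filter.atTop (nhds 1) := by
    intro t ht
    have := (hvlim t ht).norm
    rwa [c₂.unitSpeed t ht] at this
  have hwlim : ∀ t ∈ Set.Icc (0:ℝ) c₂.L,
      Filter.Tendsto (fun n => deformedDir (φ n) c₂ t) Filter.atTop (nhds (c₂.γ' t)) := by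
    intro t ht
    have := ((hnormlim t ht).inv₀ one_ne_zero).smul (hvlim t ht)
    simpa [deformedDir, inv_one, one_smul] using this
  -- eventual bounds on ‖v n t‖
  obtain ⟨N, hN⟩ := hdsup (1/2) (by norm_num)
  have hEv : ∀ᶠ n in Filter.atTop, ∀ t ∈ Set.Icc (0:ℝ) c₂.L,
      (1/2:ℝ) ≤ ‖fderiv ℝ (φ n) (c₂.γ t) (c₂.γ' t)‖
      ∧ ‖fderiv ℝ (φ n) (c₂.γ t) (c₂.γ' t)‖ ≤ 2 := by
    rw [Filter.eventually_atTop]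
    refine ⟨N, fun n hn t ht => ?_⟩
    have h1 : ‖fderiv ℝ (φ n) (c₂.γ t) (c₂.γ' t) - c₂.γ' t‖ ≤ 1/2 :=
      (hkey n t ht).trans (hN n hn _)
    have h2 := abs_norm_sub_norm_le (fderiv ℝ (φ n) (c₂.γ t) (c₂.γ' t)) (c₂.γ' t)
    rw [c₂.unitSpeed t ht] at h2
    rw [abs_le] at h2
    constructor <;> linarith [h2.1, h2.2]
  -- continuity data (eventual in n)
  have hContData : ∀ᶠ n in Filter.atTop,
      ContinuousOn (fun t => fderiv ℝ (φ n) (c₂.γ t) (c₂.γ' t)) (Set.Icc 0 c₂.L)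
      ∧ ContinuousOn (fun t => deformedDir (φ n) c₂ t) (Set.Icc 0 c₂.L)
      ∧ ContinuousOn (fun t => φ n (c₂.γ t)) (Set.Icc 0 c₂.L) := by
    filter_upwards [hEv] with n hn
    have hfd : Continuous (fderiv ℝ (φ n)) := (hC1 n).continuous_fderiv one_ne_zero
    have hv : ContinuousOn (fun t => fderiv ℝ (φ n) (c₂.γ t) (c₂.γ' t)) (Set.Icc 0 c₂.L) :=
      (hfd.comp_continuousOn hγ2).clm_apply c₂.contDeriv
    have hvne : ∀ t ∈ Set.Icc (0:ℝ) c₂.L, ‖fderiv ℝ (φ n) (c₂.γ t) (c₂.γ' t)‖ ≠ 0 :=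
      fun t ht => by have := (hn t ht).1; intro h; rw [h] at this; norm_num at this
    refine ⟨hv, ?_, ((hC1 n).continuous).comp_continuousOn hγ2⟩
    simp only [deformedDir]
    exact (hv.norm.inv₀ hvne).smul hv
  -- exp bounds
  have hexp1 : ∀ (x : EuclideanSpace ℝ (Fin d)) (σ : ℝ), Real.exp (-‖x‖ ^ 2 / σ ^ 2) ≤ 1 := by
    intro x σ
    rw [Real.exp_le_one_iff, neg_div]
    have : (0:ℝ) ≤ ‖x‖ ^ 2 / σ ^ 2 := by positivity
    linarith
  -- convergence of VdeformSelf
  have hSelf : Filter.Tendsto (fun n => VdeformSelf σx σt c₂ (φ n)) Filter.atTop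
      (nhds (V σx σt c₂ c₂)) := by
    simp only [VdeformSelf, V, vprod]
    apply tendsto_intervalIntegral₂_aux (C := 4) c₂.L_pos.le c₂.L_pos.le
    · filter_upwards [hContData] with n hn
      obtain ⟨hv, hw, hφγ⟩ := hn
      have hvf : ContinuousOn (fun p : ℝ × ℝ => fderiv ℝ (φ n) (c₂.γ p.1) (c₂.γ' p.1))
          (Set.Icc 0 c₂.L ×ˢ Set.Icc 0 c₂.L) := hv.comp continuousOn_fst (fun p hp => hp.1)
      have hvs : ContinuousOn (fun p : ℝ × ℝ => fderiv ℝ (φ n) (c₂.γ p.2) (c₂.γ' p.2))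
          (Set.Icc 0 c₂.L ×ˢ Set.Icc 0 c₂.L) := hv.comp continuousOn_snd (fun p hp => hp.2)
      have hwf : ContinuousOn (fun p : ℝ × ℝ => deformedDir (φ n) c₂ p.1)
          (Set.Icc 0 c₂.L ×ˢ Set.Icc 0 c₂.L) := hw.comp continuousOn_fst (fun p hp => hp.1)
      have hws : ContinuousOn (fun p : ℝ × ℝ => deformedDir (φ n) c₂ p.2)
          (Set.Icc 0 c₂.L ×ˢ Set.Icc 0 c₂.L) := hw.comp continuousOn_snd (fun p hp => hp.2)
      have hpf : ContinuousOn (fun p : ℝ × ℝ => φ n (c₂.γ p.1))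
          (Set.Icc 0 c₂.L ×ˢ Set.Icc 0 c₂.L) := hφγ.comp continuousOn_fst (fun p hp => hp.1)
      have hps : ContinuousOn (fun p : ℝ × ℝ => φ n (c₂.γ p.2))
          (Set.Icc 0 c₂.L ×ˢ Set.Icc 0 c₂.L) := hφγ.comp continuousOn_snd (fun p hp => hp.2)
      exact ((Real.continuous_exp.comp_continuousOn
          ((((hpf.sub hps).norm.pow 2).neg).div_const _)).mul
        (Real.continuous_exp.comp_continuousOn
          ((((hwf.sub hws).norm.pow 2).neg).div_const _))).mul
        (hvf.norm.mul hvs.norm)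
    · filter_upwards [hEv] with n hn
      intro s hs t ht
      rw [abs_of_nonneg (by positivity)]
      calc Real.exp (-‖φ n (c₂.γ s) - φ n (c₂.γ t)‖ ^ 2 / σx ^ 2)
            * Real.exp (-‖deformedDir (φ n) c₂ s - deformedDir (φ n) c₂ t‖ ^ 2 / σt ^ 2)
            * (‖fderiv ℝ (φ n) (c₂.γ s) (c₂.γ' s)‖ * ‖fderiv ℝ (φ n) (c₂.γ t) (c₂.γ' t)‖)
          ≤ 1 * 1 * (2 * 2) := by
            gcongr
            · exact hexp1 _ _
            · exact hexp1 _ _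
            · exact (hn s hs).2
            · exact (hn t ht).2
        _ = 4 := by norm_num
    · intro s hs t ht
      have hA : Filter.Tendsto
          (fun n => Real.exp (-‖φ n (c₂.γ s) - φ n (c₂.γ t)‖ ^ 2 / σx ^ 2)) Filter.atTop
          (nhds (Real.exp (-‖c₂.γ s - c₂.γ t‖ ^ 2 / σx ^ 2))) :=
        (Real.continuous_exp.tendsto _).comp
          (((((hφlim (c₂.γ s)).sub (hφlim (c₂.γ t))).norm.pow 2).neg).div_const _)
      have hB : Filter.Tendsto
          (fun n => Real.exp (-‖deformedDir (φ n) c₂ s - deformedDir (φ n) c₂ t‖ ^ 2 / σt ^ 2))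
          Filter.atTop (nhds (Real.exp (-‖c₂.γ' s - c₂.γ' t‖ ^ 2 / σt ^ 2))) :=
        (Real.continuous_exp.tendsto _).comp
          (((((hwlim s hs).sub (hwlim t ht)).norm.pow 2).neg).div_const _)
      have hC : Filter.Tendsto
          (fun n => ‖fderiv ℝ (φ n) (c₂.γ s) (c₂.γ' s)‖ * ‖fderiv ℝ (φ n) (c₂.γ t) (c₂.γ' t)‖)
          Filter.atTop (nhds (1 * 1)) := (hnormlim s hs).mul (hnormlim t ht)
      simpa using (hA.mul hB).mul hC
  -- convergence of Vdeform
  have hDef : Filter.Tendsto (fun n => Vdeform σx σt c₁ c₂ (φ n)) Filter.atTop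
      (nhds (V σx σt c₁ c₂)) := by
    simp only [Vdeform, V, vprod]
    apply tendsto_intervalIntegral₂_aux (C := 2) c₁.L_pos.le c₂.L_pos.le
    · filter_upwards [hContData] with n hn
      obtain ⟨hv, hw, hφγ⟩ := hn
      have hvs : ContinuousOn (fun p : ℝ × ℝ => fderiv ℝ (φ n) (c₂.γ p.2) (c₂.γ' p.2))
          (Set.Icc 0 c₁.L ×ˢ Set.Icc 0 c₂.L) := hv.comp continuousOn_snd (fun p hp => hp.2)
      have hws : ContinuousOn (fun p : ℝ × ℝ => deformedDir (φ n) c₂ p.2)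
          (Set.Icc 0 c₁.L ×ˢ Set.Icc 0 c₂.L) := hw.comp continuousOn_snd (fun p hp => hp.2)
      have hps : ContinuousOn (fun p : ℝ × ℝ => φ n (c₂.γ p.2))
          (Set.Icc 0 c₁.L ×ˢ Set.Icc 0 c₂.L) := hφγ.comp continuousOn_snd (fun p hp => hp.2)
      have hg1 : ContinuousOn (fun p : ℝ × ℝ => c₁.γ p.1)
          (Set.Icc 0 c₁.L ×ˢ Set.Icc 0 c₂.L) := hγ1.comp continuousOn_fst (fun p hp => hp.1)
      have hg1' : ContinuousOn (fun p : ℝ × ℝ => c₁.γ' p.1)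
          (Set.Icc 0 c₁.L ×ˢ Set.Icc 0 c₂.L) :=
        c₁.contDeriv.comp continuousOn_fst (fun p hp => hp.1)
      exact ((Real.continuous_exp.comp_continuousOn
          ((((hg1.sub hps).norm.pow 2).neg).div_const _)).mul
        (Real.continuous_exp.comp_continuousOn
          ((((hg1'.sub hws).norm.pow 2).neg).div_const _))).mul hvs.norm
    · filter_upwards [hEv] with n hn
      intro s hs t ht
      rw [abs_of_nonneg (by positivity)]
      calc Real.exp (-‖c₁.γ s - φ n (c₂.γ t)‖ ^ 2 / σx ^ 2)
            * Real.exp (-‖c₁.γ' s - deformedDir (φ n) c₂ t‖ ^ 2 / σt ^ 2)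
            * ‖fderiv ℝ (φ n) (c₂.γ t) (c₂.γ' t)‖
          ≤ 1 * 1 * 2 := by
            gcongr
            · exact hexp1 _ _
            · exact hexp1 _ _
            · exact (hn t ht).2
        _ = 2 := by norm_num
    · intro s hs t ht
      have hA : Filter.Tendsto
          (fun n => Real.exp (-‖c₁.γ s - φ n (c₂.γ t)‖ ^ 2 / σx ^ 2)) Filter.atTop
          (nhds (Real.exp (-‖c₁.γ s - c₂.γ t‖ ^ 2 / σx ^ 2))) :=
        (Real.continuous_exp.tendsto _).comp
          (((((tendsto_const_nhds.sub (hφlim (c₂.γ t))).norm.pow 2).neg).div_const _))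
      have hB : Filter.Tendsto
          (fun n => Real.exp (-‖c₁.γ' s - deformedDir (φ n) c₂ t‖ ^ 2 / σt ^ 2))
          Filter.atTop (nhds (Real.exp (-‖c₁.γ' s - c₂.γ' t‖ ^ 2 / σt ^ 2))) :=
        (Real.continuous_exp.tendsto _).comp
          (((((tendsto_const_nhds.sub (hwlim t ht)).norm.pow 2).neg).div_const _))
      simpa using (hA.mul hB).mul (hnormlim t ht)
  exact (tendsto_const_nhds.add hSelf).sub (hDef.const_mul 2)
end
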